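/- arXiv:2512.19362 — 4 statements merged into one kernel-verified Lean document; each statement's English description precedes it below -/
import Mathlib

section
/- Fix c > 0 and m > 0. Then for each sign choice ±, the map k ↦ Π±(k) from ℝ² to the 2×2 complex matrices is differentiable at every k ∈ ℝ², and for every unit vector u ∈ ℝ², the derivative of Π±(·) at k in the direction u has operator norm (as an operator on the Euclidean space ℂ²) at most c/(2 E_m(k)), and hence at most 1/(2 m c). -/
open Matrix Complex

noncomputable section

/-- Pauli matrix `σ₁`. -/
def σ1 : Matrix (Fin 2) (Fin 2) ℂ := !![0, 1; 1, 0]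

/-- Pauli matrix `σ₂`. -/
def σ2 : Matrix (Fin 2) (Fin 2) ℂ := !![0, -I; I, 0]

/-- Pauli matrix `σ₃`. -/
def σ3 : Matrix (Fin 2) (Fin 2) ℂ := !![1, 0; 0, -1]

/-- `α₁ := σ₂`. -/
def α1 : Matrix (Fin 2) (Fin 2) ℂ := σ2

/-- `α₂ := -σ₁`. -/
def α2 : Matrix (Fin 2) (Fin 2) ℂ := -σ1

/-- `γ⁰ := σ₃`. -/
def γ0 : Matrix (Fin 2) (Fin 2) ℂ := σ3

/-- The 2D Dirac symbol `H_m(k) = c (k₁ α₁ + k₂ α₂) + m c² γ⁰`. -/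
def diracSymbol (c m : ℝ) (k : EuclideanSpace ℝ (Fin 2)) : Matrix (Fin 2) (Fin 2) ℂ :=
  ((c * k 0 : ℝ) : ℂ) • α1 + ((c * k 1 : ℝ) : ℂ) • α2 + ((m * c ^ 2 : ℝ) : ℂ) • γ0

/-- The relativistic dispersion `E_m(k) = √(c²‖k‖² + m²c⁴)`. -/
def Em (c m : ℝ) (k : EuclideanSpace ℝ (Fin 2)) : ℝ :=
  Real.sqrt (c ^ 2 * ‖k‖ ^ 2 + m ^ 2 * c ^ 4)

/-- The positive-energy band projector `Π₊(k) = (1/2)(I + H_m(k)/E_m(k))`. -/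
def PiPlus (c m : ℝ) (k : EuclideanSpace ℝ (Fin 2)) : Matrix (Fin 2) (Fin 2) ℂ :=
  (1 / 2 : ℂ) • ((1 : Matrix (Fin 2) (Fin 2) ℂ) + ((Em c m k : ℝ) : ℂ)⁻¹ • diracSymbol c m k)

/-- The negative-energy band projector `Π₋(k) = (1/2)(I - H_m(k)/E_m(k))`. -/
def PiMinus (c m : ℝ) (k : EuclideanSpace ℝ (Fin 2)) : Matrix (Fin 2) (Fin 2) ℂ :=
  (1 / 2 : ℂ) • ((1 : Matrix (Fin 2) (Fin 2) ℂ) - ((Em c m k : ℝ) : ℂ)⁻¹ • diracSymbol c m k)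

/-- The band projectors viewed as continuous linear operators on the Hilbert space `ℂ²`,
so that their norm is the operator norm. -/
def PiPlusCLM (c m : ℝ) (k : EuclideanSpace ℝ (Fin 2)) :
    EuclideanSpace ℂ (Fin 2) →L[ℂ] EuclideanSpace ℂ (Fin 2) :=
  Matrix.toEuclideanCLM (𝕜 := ℂ) (PiPlus c m k)

def PiMinusCLM (c m : ℝ) (k : EuclideanSpace ℝ (Fin 2)) :
    EuclideanSpace ℂ (Fin 2) →L[ℂ] EuclideanSpace ℂ (Fin 2) :=
  Matrix.toEuclideanCLM (𝕜 := ℂ) (PiMinus c m k)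

/-! Write `d(k) := (c k₁, c k₂, m c²) ∈ ℝ³`, so that `H_m(k) = d(k) · (α₁, α₂, γ⁰)` and
`E_m(k) = ‖d(k)‖`. Then `Π±(k) = ½ (1 ± n(k) · (α₁, α₂, γ⁰))` with `n = d / ‖d‖`. Since `α₁, α₂, γ⁰`
are Hermitian and pairwise anticommute with square `1`, `(a · α)² = ‖a‖²` and the C*-identity
makes `a ↦ a · α` an isometry `ℝ³ → B(ℂ²)`. The derivative of `x ↦ x / ‖x‖` is `‖x‖⁻¹` times the
orthogonal projection onto `xᗮ`, and `d` moves at speed `c`, so `‖∂ᵤ Π±(k)‖ ≤ c / (2 E_m(k))`;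
finally `E_m(k) ≥ m c²`. -/

section Clifford

open Finset

theorem CStarAlgebra.norm_sum_smul_of_anticomm {A ι : Type*} [CStarAlgebra A] [Nontrivial A]
    [Fintype ι] [DecidableEq ι] (γ : ι → A) (hγ : ∀ i, IsSelfAdjoint (γ i))
    (hanti : ∀ i j, γ i * γ j + γ j * γ i = if i = j then 2 else 0)
    (a : EuclideanSpace ℝ ι) : ‖∑ i, (a i : ℂ) • γ i‖ = ‖a‖ := by
  set X := ∑ i, (a i : ℂ) • γ i
  have hX : IsSelfAdjoint X :=
    isSelfAdjoint_sum _ fun i _ => IsSelfAdjoint.smul (Complex.conj_ofReal _) (hγ i)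
  have hsq : X * X = ((‖a‖ ^ 2 : ℝ) : ℂ) • 1 := by
    have h2 : (2 : ℂ) • (X * X) = (2 : ℂ) • (((‖a‖ ^ 2 : ℝ) : ℂ) • 1) := by
      calc (2 : ℂ) • (X * X)
          = ∑ i, ∑ j, ((a i * a j : ℝ) : ℂ) • (γ i * γ j + γ j * γ i) := by
            simp only [X, sum_mul_sum, smul_add, sum_add_distrib, two_smul, smul_mul_smul]
            congr 1
            · simp
            · rw [sum_comm]; simp [mul_comm]
        _ = ∑ i, ((a i ^ 2 : ℝ) : ℂ) • (2 : A) := by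
            simp [hanti, sq]
        _ = (2 : ℂ) • (((‖a‖ ^ 2 : ℝ) : ℂ) • 1) := by
            rw [EuclideanSpace.real_norm_sq_eq, smul_smul, Complex.ofReal_sum, mul_sum, sum_smul]
            refine sum_congr rfl fun i _ => ?_
            rw [mul_comm, mul_smul, two_smul, one_add_one_eq_two]
    exact smul_right_injective A two_ne_zero h2
  have : ‖X‖ ^ 2 = ‖a‖ ^ 2 := by
    rw [← hX.norm_mul_self, hsq, norm_smul, norm_one, mul_one, Complex.norm_real,
      Real.norm_of_nonneg (by positivity)]
  exact (pow_left_inj₀ (norm_nonneg _) (norm_nonneg _) two_ne_zero).1 this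

end Clifford

section Normalize

variable {F : Type*} [NormedAddCommGroup F] [InnerProductSpace ℝ F]

theorem hasFDerivAt_norm_of_ne_zero {x : F} (hx : x ≠ 0) :
    HasFDerivAt (‖·‖) (‖x‖⁻¹ • innerSL ℝ x) x := by
  have h := (hasStrictFDerivAt_norm_sq x).hasFDerivAt.sqrt (by positivity)
  simp only [Real.sqrt_sq (norm_nonneg _)] at h
  convert h using 1
  ext w
  simp
  ring

theorem NormedSpace.hasFDerivAt_normalize {x : F} (hx : x ≠ 0) :
    HasFDerivAt normalize (‖x‖⁻¹ • (ℝ ∙ x)ᗮ.starProjection) x := by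
  have h := ((hasDerivAt_inv (norm_ne_zero_iff.2 hx)).comp_hasFDerivAt x
    (hasFDerivAt_norm_of_ne_zero hx)).smul (hasFDerivAt_id x)
  convert h using 1
  · rfl
  ext w
  simp [Submodule.starProjection_singleton]
  module

end Normalize

-- `Complex.coe_smul` does not rewrite here: the `ℝ`-action on operators is a different,
-- definitionally equal, instance.
theorem ContinuousLinearMap.ofReal_smul {E F : Type*} [NormedAddCommGroup E] [NormedSpace ℂ E]
    [NormedAddCommGroup F] [NormedSpace ℂ F] (r : ℝ) (T : E →L[ℂ] F) : (r : ℂ) • T = r • T :=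
  Complex.coe_smul r T

def diracMatrix : Fin 3 → Matrix (Fin 2) (Fin 2) ℂ := ![α1, α2, γ0]

theorem diracMatrix_isHermitian (i : Fin 3) : (diracMatrix i).IsHermitian := by
  fin_cases i <;>
    simp [Matrix.IsHermitian, diracMatrix, α1, α2, γ0, σ1, σ2, σ3, ← Matrix.ext_iff,
      Fin.forall_fin_two]

theorem diracMatrix_anticomm (i j : Fin 3) :
    diracMatrix i * diracMatrix j + diracMatrix j * diracMatrix i = if i = j then 2 else 0 := by
  fin_cases i <;> fin_cases j <;>
    simp [diracMatrix, α1, α2, γ0, σ1, σ2, σ3, Matrix.ofNat_fin_two, ← Matrix.ext_iff,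
      one_add_one_eq_two]

def diracCLM :
    EuclideanSpace ℝ (Fin 3) →L[ℝ] EuclideanSpace ℂ (Fin 2) →L[ℂ] EuclideanSpace ℂ (Fin 2) :=
  ∑ i, (EuclideanSpace.proj i).smulRight (Matrix.toEuclideanCLM (𝕜 := ℂ) (diracMatrix i))

theorem diracCLM_apply (a : EuclideanSpace ℝ (Fin 3)) :
    diracCLM a = ∑ i, (a i : ℂ) • Matrix.toEuclideanCLM (𝕜 := ℂ) (diracMatrix i) := by
  simp only [diracCLM, FunLike.coe_sum, Finset.sum_apply,
    ContinuousLinearMap.smulRight_apply, PiLp.proj_apply, ContinuousLinearMap.ofReal_smul]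

theorem norm_diracCLM (a : EuclideanSpace ℝ (Fin 3)) : ‖diracCLM a‖ = ‖a‖ := by
  rw [diracCLM_apply]
  refine CStarAlgebra.norm_sum_smul_of_anticomm _ (fun i => ?_) (fun i j => ?_) a
  · exact IsSelfAdjoint.map (diracMatrix_isHermitian i) _
  · rw [← map_mul, ← map_mul, ← map_add, diracMatrix_anticomm]
    split_ifs
    exacts [map_ofNat _ 2, map_zero _]

def planeEmbedding : EuclideanSpace ℝ (Fin 2) →ₗᵢ[ℝ] EuclideanSpace ℝ (Fin 3) where
  toFun k := !₂[k 0, k 1, 0]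
  map_add' k l := by ext i; fin_cases i <;> simp
  map_smul' r k := by ext i; fin_cases i <;> simp
  norm_map' k := by simp [EuclideanSpace.norm_eq, Fin.sum_univ_three, Fin.sum_univ_two]

def diracVector (c m : ℝ) (k : EuclideanSpace ℝ (Fin 2)) : EuclideanSpace ℝ (Fin 3) :=
  c • planeEmbedding k + !₂[0, 0, m * c ^ 2]

theorem norm_diracVector (c m : ℝ) (k : EuclideanSpace ℝ (Fin 2)) :
    ‖diracVector c m k‖ = Em c m k := by
  rw [Em, EuclideanSpace.norm_eq, EuclideanSpace.norm_eq, Real.sq_sqrt (by positivity)]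
  congr 1
  simp [diracVector, planeEmbedding, Fin.sum_univ_three, Fin.sum_univ_two]
  ring

theorem toEuclideanCLM_diracSymbol (c m : ℝ) (k : EuclideanSpace ℝ (Fin 2)) :
    Matrix.toEuclideanCLM (𝕜 := ℂ) (diracSymbol c m k) = diracCLM (diracVector c m k) := by
  simp [diracCLM_apply, diracSymbol, diracVector, planeEmbedding, Fin.sum_univ_three, diracMatrix]

theorem hasFDerivAt_diracVector (c m : ℝ) (k : EuclideanSpace ℝ (Fin 2)) :
    HasFDerivAt (diracVector c m) (c • planeEmbedding.toContinuousLinearMap) k :=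
  (planeEmbedding.toContinuousLinearMap.hasFDerivAt.const_smul c).add_const _

def bandProjector (s c m : ℝ) (k : EuclideanSpace ℝ (Fin 2)) :
    EuclideanSpace ℂ (Fin 2) →L[ℂ] EuclideanSpace ℂ (Fin 2) :=
  (1 / 2 : ℝ) • (1 + s • diracCLM (NormedSpace.normalize (diracVector c m k)))

theorem piPlusCLM_eq_bandProjector (c m : ℝ) : PiPlusCLM c m = bandProjector 1 c m := by
  ext1 k
  simp [PiPlusCLM, PiPlus, bandProjector, toEuclideanCLM_diracSymbol, NormedSpace.normalize,
    norm_diracVector, ← ContinuousLinearMap.ofReal_smul]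

theorem piMinusCLM_eq_bandProjector (c m : ℝ) : PiMinusCLM c m = bandProjector (-1) c m := by
  ext1 k
  simp [PiMinusCLM, PiMinus, bandProjector, toEuclideanCLM_diracSymbol, NormedSpace.normalize,
    norm_diracVector, ← ContinuousLinearMap.ofReal_smul, sub_eq_add_neg]

theorem hasFDerivAt_bandProjector (s : ℝ) {c m : ℝ} {k : EuclideanSpace ℝ (Fin 2)}
    (hk : diracVector c m k ≠ 0) :
    HasFDerivAt (bandProjector s c m)
      ((1 / 2 : ℝ) • s • diracCLM ∘L
        (‖diracVector c m k‖⁻¹ • (ℝ ∙ diracVector c m k)ᗮ.starProjection) ∘L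
          (c • planeEmbedding.toContinuousLinearMap)) k :=
  (((diracCLM.hasFDerivAt.comp k ((NormedSpace.hasFDerivAt_normalize hk).comp k
    (hasFDerivAt_diracVector c m k))).const_smul s).const_add 1).const_smul (1 / 2 : ℝ)

theorem norm_fderiv_bandProjector_apply_le (s : ℝ) {c m : ℝ} (hc : 0 ≤ c)
    {k : EuclideanSpace ℝ (Fin 2)} (hk : diracVector c m k ≠ 0) (u : EuclideanSpace ℝ (Fin 2)) :
    ‖fderiv ℝ (bandProjector s c m) k u‖ ≤ |s| * c * ‖u‖ / (2 * Em c m k) := by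
  rw [(hasFDerivAt_bandProjector s hk).fderiv]
  calc _ = 2⁻¹ * |s| * ‖diracVector c m k‖⁻¹ *
        ‖(ℝ ∙ diracVector c m k)ᗮ.starProjection (c • planeEmbedding u)‖ := by
        simp [norm_smul, norm_diracCLM, mul_assoc, mul_left_comm,
          -Submodule.starProjection_orthogonal_val]
    _ ≤ 2⁻¹ * |s| * ‖diracVector c m k‖⁻¹ * ‖c • planeEmbedding u‖ := by
        gcongr; exact Submodule.norm_starProjection_apply_le _ _
    _ = |s| * c * ‖u‖ / (2 * Em c m k) := by
        rw [norm_smul, LinearIsometry.norm_map, norm_diracVector, Real.norm_of_nonneg hc]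
        ring

theorem mul_sq_le_Em (c m : ℝ) (k : EuclideanSpace ℝ (Fin 2)) : m * c ^ 2 ≤ Em c m k :=
  Real.le_sqrt_of_sq_le (by nlinarith [sq_nonneg (c * ‖k‖)])

/-- For `c > 0`, `m > 0`, the maps `k ↦ Π±(k)` are differentiable
everywhere, and the directional derivative along any unit vector `u` has operator norm
at most `c / (2 E_m(k))`, hence at most `1 / (2 m c)`. -/
theorem bandProjector_derivative_bound_massive (c m : ℝ) (hc : 0 < c) (hm : 0 < m)
    (k : EuclideanSpace ℝ (Fin 2)) :
    (DifferentiableAt ℝ (fun k' => PiPlusCLM c m k') k ∧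
      ∀ u : EuclideanSpace ℝ (Fin 2), ‖u‖ = 1 →
        ‖fderiv ℝ (fun k' => PiPlusCLM c m k') k u‖ ≤ c / (2 * Em c m k) ∧
        ‖fderiv ℝ (fun k' => PiPlusCLM c m k') k u‖ ≤ 1 / (2 * m * c)) ∧
    (DifferentiableAt ℝ (fun k' => PiMinusCLM c m k') k ∧
      ∀ u : EuclideanSpace ℝ (Fin 2), ‖u‖ = 1 →
        ‖fderiv ℝ (fun k' => PiMinusCLM c m k') k u‖ ≤ c / (2 * Em c m k) ∧
        ‖fderiv ℝ (fun k' => PiMinusCLM c m k') k u‖ ≤ 1 / (2 * m * c)) := by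
  have hmc : 0 < m * c ^ 2 := by positivity
  have hE := mul_sq_le_Em c m k
  have hv : diracVector c m k ≠ 0 := norm_pos_iff.1 (norm_diracVector c m k ▸ hmc.trans_le hE)
  have hbound : c / (2 * Em c m k) ≤ 1 / (2 * m * c) :=
    calc c / (2 * Em c m k) ≤ c / (2 * (m * c ^ 2)) := by gcongr
      _ = 1 / (2 * m * c) := by field_simp
  have bandProjector_bound (s : ℝ) (hs : |s| = 1) :
      DifferentiableAt ℝ (bandProjector s c m) k ∧
        ∀ u : EuclideanSpace ℝ (Fin 2), ‖u‖ = 1 →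
          ‖fderiv ℝ (bandProjector s c m) k u‖ ≤ c / (2 * Em c m k) ∧
          ‖fderiv ℝ (bandProjector s c m) k u‖ ≤ 1 / (2 * m * c) := by
    refine ⟨(hasFDerivAt_bandProjector s hv).differentiableAt, fun u hu => ?_⟩
    have h := norm_fderiv_bandProjector_apply_le s hc.le hv u
    rw [hs, hu, one_mul, mul_one] at h
    exact ⟨h, h.trans hbound⟩
  rw [piPlusCLM_eq_bandProjector, piMinusCLM_eq_bandProjector]
  exact ⟨bandProjector_bound 1 abs_one, bandProjector_bound (-1) (by simp)⟩
end
end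

section
/- For every c > 0, m ≥ 0, k ∈ ℝ² with E_m(k) ≠ 0, and j ∈ {1,2}, the identity Π₊(k) · α_j · Π₊(k) = (c k_j / E_m(k)) · Π₊(k) holds, and likewise Π₋(k) · α_j · Π₋(k) = −(c k_j / E_m(k)) · Π₋(k). -/
open Matrix Complex

noncomputable section

/-- The family `α = (α₁, α₂)`. -/
def alphaVec : Fin 2 → Matrix (Fin 2) (Fin 2) ℂ := ![α1, α2]

/-- Auxiliary algebraic lemma. -/
theorem aux_proj {M : Type*} [Ring M] [Algebra ℂ M]
    (H A : M) (e a : ℂ) (he : e ≠ 0)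
    (h1 : H * A + A * H = (2*a) • 1) (h2 : H * H = (e^2) • 1) :
    ((1/2 : ℂ) • (1 + e⁻¹ • H)) * A * ((1/2 : ℂ) • (1 + e⁻¹ • H))
      = (a/e) • ((1/2 : ℂ) • (1 + e⁻¹ • H)) := by
  have key : (e • 1 + H) * A * (e • 1 + H) = (2*a) • (e • 1 + H) := by
    have expand : (e • 1 + H) * A * (e • 1 + H)
        = (e^2) • A + e • (H * A + A * H) + H * A * H := by
      simp only [add_mul, mul_add, smul_mul_assoc, mul_smul_comm, one_mul, mul_one,
        smul_smul, pow_two]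
      module
    have h3 : H * A * H = (2*a) • H - (e^2) • A := by
      have h4 : H * A = (2*a) • 1 - A * H := by rw [← h1]; abel
      rw [h4, sub_mul, smul_mul_assoc, one_mul, mul_assoc, h2, mul_smul_comm, mul_one]
    rw [expand, h1, h3]
    simp only [smul_add, smul_smul]
    module
  have e1 : ((2*e) : ℂ)⁻¹ * e = 1/2 := by
    rw [mul_inv, mul_assoc, inv_mul_cancel₀ he, mul_one, one_div]
  have e2 : ((2*e) : ℂ)⁻¹ = 1/2 * e⁻¹ := by rw [mul_inv, one_div]
  have hP : (2*e)⁻¹ • (e • 1 + H) = ((1/2 : ℂ) • (1 + e⁻¹ • H)) := by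
    rw [smul_add, smul_add, smul_smul, smul_smul, e1, e2]
  rw [← hP, smul_mul_assoc, smul_mul_assoc, mul_smul_comm, key,
    smul_smul, smul_smul, smul_smul]
  congr 1
  field_simp

/-- For `E_m(k) ≠ 0` and `j ∈ {1,2}`,
`Π₊ αⱼ Π₊ = (c kⱼ / E_m(k)) Π₊` and `Π₋ αⱼ Π₋ = -(c kⱼ / E_m(k)) Π₋`. -/
theorem proj_alpha_proj (c m : ℝ) (hc : 0 < c) (hm : 0 ≤ m)
    (k : EuclideanSpace ℝ (Fin 2)) (hE : Em c m k ≠ 0) (j : Fin 2) :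
    PiPlus c m k * alphaVec j * PiPlus c m k =
      ((c * k j / Em c m k : ℝ) : ℂ) • PiPlus c m k ∧
    PiMinus c m k * alphaVec j * PiMinus c m k =
      ((-(c * k j / Em c m k) : ℝ) : ℂ) • PiMinus c m k := by
  set H := diracSymbol c m k with hHdef
  set e : ℂ := ((Em c m k : ℝ) : ℂ) with hedef
  set a : ℂ := ((c * k j : ℝ) : ℂ) with hadef
  have hec : e ≠ 0 := Complex.ofReal_ne_zero.mpr hE
  have h1 : H * alphaVec j + alphaVec j * H = (2*a) • 1 := by
    fin_cases j <;>
    · ext i i'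
      fin_cases i <;> fin_cases i' <;>
        simp [hHdef, hadef, diracSymbol, alphaVec, α1, α2, γ0, σ1, σ2, σ3,
          Matrix.mul_apply, Fin.sum_univ_two, Matrix.one_apply] <;> ring_nf <;>
        simp [Complex.I_sq] <;> ring_nf
  have h2 : H * H = (e^2) • 1 := by
    have hn : ‖k‖^2 = k 0^2 + k 1^2 := by
      rw [EuclideanSpace.norm_eq, Real.sq_sqrt (by positivity)]
      simp [Fin.sum_univ_two, _root_.sq_abs]
    have hE2 : (Em c m k)^2 = (c*k 0)^2 + (c*k 1)^2 + (m*c^2)^2 := by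
      rw [Em, Real.sq_sqrt (by positivity), hn]; ring
    have hE2c : e^2 = ((c*k 0 : ℝ) : ℂ)^2 + ((c*k 1 : ℝ) : ℂ)^2 + ((m*c^2 : ℝ) : ℂ)^2 := by
      rw [hedef, ← Complex.ofReal_pow, hE2]; push_cast; ring
    ext i i'
    fin_cases i <;> fin_cases i' <;>
      simp [hHdef, diracSymbol, α1, α2, γ0, σ1, σ2, σ3, Matrix.mul_apply,
        Fin.sum_univ_two, Matrix.one_apply, hE2c] <;> ring_nf <;>
      simp [Complex.I_sq] <;> ring_nf
  constructor
  · have h := aux_proj H (alphaVec j) e a hec h1 h2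
    have hco : ((c * k j / Em c m k : ℝ) : ℂ) = a / e := by
      rw [hadef, hedef]; push_cast; ring
    rw [PiPlus, hco]
    exact h
  · have h1' : (-H) * alphaVec j + alphaVec j * (-H) = (2*(-a)) • 1 := by
      rw [neg_mul, mul_neg, ← neg_add, h1, mul_neg, neg_smul]
    have h2' : (-H) * (-H) = (e^2) • 1 := by rw [neg_mul_neg, h2]
    have h := aux_proj (-H) (alphaVec j) e (-a) hec h1' h2'
    have hco : ((-(c * k j / Em c m k) : ℝ) : ℂ) = (-a) / e := by
      rw [hadef, hedef]; push_cast; ring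
    have hPM : PiMinus c m k = (1/2 : ℂ) • (1 + e⁻¹ • (-H)) := by
      rw [PiMinus, smul_neg, sub_eq_add_neg]
    rw [hPM, hco]
    exact h
end
end

section
/- For every c > 0, m ≥ 0, k ∈ ℝ² with E_m(k) ≠ 0, every j ∈ {1,2}, and every 2×2 complex matrix M, writing M_D := Π₊(k) M Π₊(k) + Π₋(k) M Π₋(k) for the band-diagonal part of M, one has Tr[ Π₊(k) · α_j · M_D ] = (c k_j / E_m(k)) · Tr[ Π₊(k) · M ], and likewise Tr[ Π₋(k) · α_j · M_D ] = −(c k_j / E_m(k)) · Tr[ Π₋(k) · M ]. -/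
/-!
With `G := H_m(k) / E_m(k)` one has `G² = 1`, so `Π₊ = (1 + G)/2` and `Π₋ = (1 - G)/2` are
complementary idempotents with `Π₋ Π₊ = Π₊ Π₋ = 0`. The anticommutator `{αⱼ, H_m(k)} = 2 c kⱼ`
gives `Π± αⱼ Π± = ±(c kⱼ / E_m(k)) Π±`, which handles the diagonal term of `M_D`; the cross
term has trace zero by cyclicity, because it contains the factor `Π∓ Π± = 0`.
-/

open Matrix Complex

noncomputable section

section Involution

variable {K A : Type*} [Field K] [Ring A] [Algebra K A] {G : A}

theorem one_add_mul_one_add_of_mul_self_eq_one (hG : G * G = 1) :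
    (1 + G) * (1 + G) = (2 : K) • (1 + G) :=
  calc (1 + G) * (1 + G) = 1 + G + G + G * G := by noncomm_ring
    _ = (2 : K) • (1 + G) := by rw [hG]; module

theorem isIdempotentElem_half_one_add [NeZero (2 : K)] (hG : G * G = 1) :
    IsIdempotentElem ((1 / 2 : K) • (1 + G)) := by
  rw [IsIdempotentElem, smul_mul_smul, one_add_mul_one_add_of_mul_self_eq_one (K := K) hG,
    smul_smul]
  congr 1
  field_simp

theorem half_one_add_neg_mul_half_one_add (hG : G * G = 1) :
    (1 / 2 : K) • (1 + -G) * (1 / 2 : K) • (1 + G) = 0 := by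
  rw [smul_mul_smul, show (1 + -G) * (1 + G) = 1 - G * G by noncomm_ring, hG, sub_self, smul_zero]

theorem one_add_mul_mul_one_add {X : A} {t : K} (hG : G * G = 1)
    (hXG : X * G + G * X = (2 * t) • 1) :
    (1 + G) * X * (1 + G) = (2 * t) • (1 + G) := by
  have hGXG : G * X * G = (2 * t) • G - X := by
    rw [eq_sub_of_add_eq' hXG, sub_mul, smul_mul_assoc, one_mul, mul_assoc, hG, mul_one]
  calc (1 + G) * X * (1 + G) = X + (X * G + G * X) + G * X * G := by noncomm_ring
    _ = (2 * t) • (1 + G) := by rw [hXG, hGXG]; module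

theorem half_one_add_mul_mul_half_one_add [NeZero (2 : K)] {X : A} {t : K} (hG : G * G = 1)
    (hXG : X * G + G * X = (2 * t) • 1) :
    (1 / 2 : K) • (1 + G) * X * (1 / 2 : K) • (1 + G) = t • (1 / 2 : K) • (1 + G) := by
  rw [smul_mul_assoc, smul_mul_smul, one_add_mul_mul_one_add hG hXG, smul_smul, smul_smul]
  congr 1
  field_simp

end Involution

theorem Matrix.trace_mul_mul_add_of_isIdempotentElem {n R : Type*} [Fintype n] [CommRing R]
    {P Q X : Matrix n n R} {t : R} (hP : IsIdempotentElem P) (hQP : Q * P = 0)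
    (hPXP : P * X * P = t • P) (M : Matrix n n R) :
    (P * X * (P * M * P + Q * M * Q)).trace = t * (P * M).trace := by
  have hdiag : (P * X * (P * M * P)).trace = t * (P * M).trace := by
    rw [show P * X * (P * M * P) = P * X * P * M * P by noncomm_ring, hPXP, smul_mul_assoc,
      smul_mul_assoc, trace_smul, trace_mul_comm, ← mul_assoc, hP.eq, smul_eq_mul]
  have hoff : (P * X * (Q * M * Q)).trace = 0 := by
    rw [trace_mul_comm, show Q * M * Q * (P * X) = Q * M * (Q * P) * X by noncomm_ring, hQP,
      mul_zero, zero_mul, trace_zero]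
  rw [mul_add, trace_add, hdiag, hoff, add_zero]

section Clifford

variable {K A : Type*} [CommRing K] [Ring A] [Algebra K A] {a b g : A}

theorem mul_smul_add_smul_add_smul_add (ha : a * a = 1) (hba : b * a = -(a * b))
    (hga : g * a = -(a * g)) (x y z : K) :
    a * (x • a + y • b + z • g) + (x • a + y • b + z • g) * a = (2 * x) • 1 := by
  simp only [mul_add, add_mul, mul_smul_comm, smul_mul_assoc, ha, hba, hga]
  module

theorem smul_add_smul_add_smul_mul_self (ha : a * a = 1) (hb : b * b = 1) (hg : g * g = 1)
    (hba : b * a = -(a * b)) (hga : g * a = -(a * g)) (hgb : g * b = -(b * g)) (x y z : K) :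
    (x • a + y • b + z • g) * (x • a + y • b + z • g) = (x ^ 2 + y ^ 2 + z ^ 2) • 1 := by
  simp only [mul_add, add_mul, smul_mul_smul, ha, hb, hg, hba, hga, hgb]
  module

end Clifford

theorem dirac_clifford :
    α1 * α1 = 1 ∧ α2 * α2 = 1 ∧ γ0 * γ0 = 1 ∧
      α2 * α1 = -(α1 * α2) ∧ γ0 * α1 = -(α1 * γ0) ∧ γ0 * α2 = -(α2 * γ0) := by
  refine ⟨?_, ?_, ?_, ?_, ?_, ?_⟩ <;> simp [α1, α2, γ0, σ1, σ2, σ3, one_fin_two]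

theorem Em_sq (c m : ℝ) (k : EuclideanSpace ℝ (Fin 2)) :
    Em c m k ^ 2 = (c * k 0) ^ 2 + (c * k 1) ^ 2 + (m * c ^ 2) ^ 2 := by
  rw [Em, Real.sq_sqrt (by positivity), EuclideanSpace.norm_sq_eq, Fin.sum_univ_two,
    Real.norm_eq_abs, Real.norm_eq_abs, sq_abs, sq_abs]
  ring

theorem diracSymbol_mul_self (c m : ℝ) (k : EuclideanSpace ℝ (Fin 2)) :
    diracSymbol c m k * diracSymbol c m k = ((Em c m k ^ 2 : ℝ) : ℂ) • 1 := by
  obtain ⟨h11, h22, h00, h21, h01, h02⟩ := dirac_clifford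
  rw [diracSymbol, smul_add_smul_add_smul_mul_self h11 h22 h00 h21 h01 h02, Em_sq]
  push_cast
  rfl

theorem alphaVec_mul_diracSymbol_add (c m : ℝ) (k : EuclideanSpace ℝ (Fin 2)) (j : Fin 2) :
    alphaVec j * diracSymbol c m k + diracSymbol c m k * alphaVec j =
      ((2 * (c * k j) : ℝ) : ℂ) • 1 := by
  obtain ⟨h11, h22, -, h21, h01, h02⟩ := dirac_clifford
  fin_cases j
  · rw [ofReal_mul]
    exact mul_smul_add_smul_add_smul_add h11 h21 h01 _ _ _
  · rw [ofReal_mul, diracSymbol, add_comm (_ • α1)]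
    exact mul_smul_add_smul_add_smul_add h22 (by rw [h21, neg_neg]) h02 _ _ _

def diracSign (c m : ℝ) (k : EuclideanSpace ℝ (Fin 2)) : Matrix (Fin 2) (Fin 2) ℂ :=
  ((Em c m k : ℝ) : ℂ)⁻¹ • diracSymbol c m k

theorem PiPlus_eq (c m : ℝ) (k : EuclideanSpace ℝ (Fin 2)) :
    PiPlus c m k = (1 / 2 : ℂ) • (1 + diracSign c m k) :=
  rfl

theorem PiMinus_eq (c m : ℝ) (k : EuclideanSpace ℝ (Fin 2)) :
    PiMinus c m k = (1 / 2 : ℂ) • (1 + -diracSign c m k) := by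
  rw [PiMinus, diracSign, sub_eq_add_neg]

theorem diracSign_mul_self {c m : ℝ} {k : EuclideanSpace ℝ (Fin 2)} (hE : Em c m k ≠ 0) :
    diracSign c m k * diracSign c m k = 1 := by
  have hE' : (Em c m k : ℂ) ≠ 0 := ofReal_ne_zero.mpr hE
  rw [diracSign, smul_mul_smul, diracSymbol_mul_self, smul_smul, ofReal_pow, ← sq, ← mul_pow,
    inv_mul_cancel₀ hE', one_pow, one_smul]

theorem alphaVec_mul_diracSign_add {c m : ℝ} {k : EuclideanSpace ℝ (Fin 2)} (hE : Em c m k ≠ 0)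
    (j : Fin 2) :
    alphaVec j * diracSign c m k + diracSign c m k * alphaVec j =
      (2 * ((c * k j / Em c m k : ℝ) : ℂ)) • 1 := by
  have hE' : (Em c m k : ℂ) ≠ 0 := ofReal_ne_zero.mpr hE
  rw [diracSign, mul_smul_comm, smul_mul_assoc, ← smul_add, alphaVec_mul_diracSymbol_add,
    smul_smul]
  congr 1
  push_cast
  field_simp

theorem trace_proj_alpha_diag_general (c m : ℝ)
    (k : EuclideanSpace ℝ (Fin 2)) (hE : Em c m k ≠ 0) (j : Fin 2)
    (M : Matrix (Fin 2) (Fin 2) ℂ) :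
    (PiPlus c m k * alphaVec j *
        (PiPlus c m k * M * PiPlus c m k + PiMinus c m k * M * PiMinus c m k)).trace =
      ((c * k j / Em c m k : ℝ) : ℂ) * (PiPlus c m k * M).trace ∧
    (PiMinus c m k * alphaVec j *
        (PiPlus c m k * M * PiPlus c m k + PiMinus c m k * M * PiMinus c m k)).trace =
      ((-(c * k j / Em c m k) : ℝ) : ℂ) * (PiMinus c m k * M).trace := by
  set G := diracSign c m k
  have hG : G * G = 1 := diracSign_mul_self hE
  have hαG : alphaVec j * G + G * alphaVec j = (2 * ((c * k j / Em c m k : ℝ) : ℂ)) • 1 :=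
    alphaVec_mul_diracSign_add hE j
  have hG_neg : -G * -G = 1 := by rw [neg_mul_neg, hG]
  have hαG_neg : alphaVec j * -G + -G * alphaVec j =
      (2 * -((c * k j / Em c m k : ℝ) : ℂ)) • 1 := by
    rw [mul_neg, neg_mul, ← neg_add, hαG, mul_neg, neg_smul]
  rw [PiPlus_eq, PiMinus_eq]
  constructor
  · exact trace_mul_mul_add_of_isIdempotentElem (isIdempotentElem_half_one_add hG)
      (half_one_add_neg_mul_half_one_add hG) (half_one_add_mul_mul_half_one_add hG hαG) M
  · rw [add_comm ((1 / 2 : ℂ) • (1 + G) * M * _), ofReal_neg]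
    refine trace_mul_mul_add_of_isIdempotentElem (isIdempotentElem_half_one_add hG_neg) ?_
      (half_one_add_mul_mul_half_one_add hG_neg hαG_neg) M
    simpa only [neg_neg] using half_one_add_neg_mul_half_one_add hG_neg

/-- For `E_m(k) ≠ 0`, `j ∈ {1,2}` and any `2 × 2` matrix `M`, writing
`M_D := Π₊ M Π₊ + Π₋ M Π₋`, one has
`Tr[Π₊ αⱼ M_D] = (c kⱼ / E_m(k)) Tr[Π₊ M]` and
`Tr[Π₋ αⱼ M_D] = -(c kⱼ / E_m(k)) Tr[Π₋ M]`. -/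
theorem trace_proj_alpha_diag (c m : ℝ) (hc : 0 < c) (hm : 0 ≤ m)
    (k : EuclideanSpace ℝ (Fin 2)) (hE : Em c m k ≠ 0) (j : Fin 2)
    (M : Matrix (Fin 2) (Fin 2) ℂ) :
    (PiPlus c m k * alphaVec j *
        (PiPlus c m k * M * PiPlus c m k + PiMinus c m k * M * PiMinus c m k)).trace =
      ((c * k j / Em c m k : ℝ) : ℂ) * (PiPlus c m k * M).trace ∧
    (PiMinus c m k * alphaVec j *
        (PiPlus c m k * M * PiPlus c m k + PiMinus c m k * M * PiMinus c m k)).trace =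
      ((-(c * k j / Em c m k) : ℝ) : ℂ) * (PiMinus c m k * M).trace :=
  trace_proj_alpha_diag_general c m k hE j M
end
end

section
/- Let ψ : ℝ² → ℂ² be a Schwartz function and define the density ρ(x) := ‖ψ(x)‖²_{ℂ²}. Then for every k ∈ ℝ², the weighted Fourier transform of ρ obeys ‖k‖ · | ∫_{ℝ²} e^{-i k·x} ρ(x) dx | ≤ 2 · ‖ψ‖_{L²} · ‖∇ψ‖_{L²}, where ‖ψ‖_{L²}² = ∫_{ℝ²} ‖ψ(x)‖²_{ℂ²} dx and ‖∇ψ‖_{L²}² = ∫_{ℝ²} ( ‖∂₁ψ(x)‖²_{ℂ²} + ‖∂₂ψ(x)‖²_{ℂ²} ) dx. -/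
/-!
Differentiating along `k` multiplies the Fourier transform of `ρ = ‖ψ‖²` at `ξ = k / 2π` by
`2πi ⟪ξ, k⟫ = i ‖k‖²`, so `‖k‖² |ρ̂(ξ)| ≤ ‖∂ₖρ‖_{L¹}`. Pointwise
`|∂ₖρ| = 2 |⟪ψ, ∂ₖψ⟫| ≤ 2 ‖k‖ ‖ψ‖ |∇ψ|`, and Cauchy–Schwarz in `L²` bounds `∫ ‖ψ‖ |∇ψ|`.
-/

open MeasureTheory SchwartzMap LineDeriv
open scoped FourierTransform Real RealInnerProductSpace

noncomputable section

section Fourier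

variable {V F : Type*} [NormedAddCommGroup V] [InnerProductSpace ℝ V] [FiniteDimensional ℝ V]
  [MeasurableSpace V] [BorelSpace V] [NormedAddCommGroup F] [NormedSpace ℂ F]

theorem integral_cexp_neg_inner_smul_eq_fourier (f : V → F) (k : V) :
    ∫ x, Complex.exp (-(Complex.I * (⟪k, x⟫ : ℂ))) • f x = 𝓕 f ((2 * π)⁻¹ • k) := by
  rw [Real.fourier_eq']
  congr 1 with x
  rw [real_inner_smul_right, real_inner_comm]
  congr 2
  push_cast
  field_simp

theorem SchwartzMap.sq_norm_mul_norm_fourier_le_integral_norm_fderiv [CompleteSpace F]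
    (f : 𝓢(V, F)) (k : V) :
    ‖k‖ ^ 2 * ‖𝓕 (f : V → F) ((2 * π)⁻¹ • k)‖ ≤ ∫ x, ‖fderiv ℝ f x k‖ := by
  have hinner : ⟪(2 * π)⁻¹ • k, k⟫ = (2 * π)⁻¹ * ‖k‖ ^ 2 := by
    rw [real_inner_smul_left, real_inner_self_eq_norm_sq]
  have hg : (fun x : V => ⟪x, k⟫).HasTemperateGrowth := ((innerSL ℝ).flip k).hasTemperateGrowth
  have hfourier := congrArg (· ((2 * π)⁻¹ • k)) (fourier_lineDerivOp_eq f k)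
  simp only [fourier_coe, smul_apply] at hfourier
  rw [smulLeftCLM_apply_apply hg, hinner] at hfourier
  calc ‖k‖ ^ 2 * ‖𝓕 (f : V → F) ((2 * π)⁻¹ • k)‖
      = ‖𝓕 ((∂_{k} f : 𝓢(V, F)) : V → F) ((2 * π)⁻¹ • k)‖ := by
        rw [hfourier, norm_smul, norm_smul, fourier_coe]
        have h2π : ‖2 * (π : ℂ) * Complex.I‖ = 2 * π := by simp [Real.pi_pos.le]
        rw [h2π, Real.norm_of_nonneg (by positivity)]
        field_simp
    _ ≤ ‖(∂_{k} f : 𝓢(V, F)).toLp 1‖ := by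
        rw [← fourier_coe]
        exact norm_fourier_apply_le_toLp_one _ _
    _ = ∫ x, ‖fderiv ℝ f x k‖ := by
        simp only [norm_toLp_one, lineDerivOp_apply_eq_fderiv]

end Fourier

section NormSq

variable {V E : Type*} [NormedAddCommGroup V] [NormedSpace ℝ V]
  [NormedAddCommGroup E] [InnerProductSpace ℝ E]

def SchwartzMap.normSq (ψ : 𝓢(V, E)) : 𝓢(V, ℂ) :=
  bilinLeftCLM ((ContinuousLinearMap.compL ℝ E ℝ ℂ Complex.ofRealCLM).comp (innerSL ℝ))
    ψ.hasTemperateGrowth ψ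

@[simp]
theorem SchwartzMap.normSq_apply (ψ : 𝓢(V, E)) (x : V) : ψ.normSq x = ((‖ψ x‖ ^ 2 : ℝ) : ℂ) := by
  simp [normSq]

theorem SchwartzMap.fderiv_normSq_apply (ψ : 𝓢(V, E)) (x v : V) :
    fderiv ℝ ψ.normSq x v = ((2 * ⟪ψ x, fderiv ℝ ψ x v⟫ : ℝ) : ℂ) := by
  have hnormSq : HasFDerivAt (fun y => ‖ψ y‖ ^ 2) (2 • (innerSL ℝ (ψ x)).comp (fderiv ℝ ψ x)) x :=
    ψ.differentiableAt.hasFDerivAt.norm_sq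
  have h := Complex.ofRealCLM.hasFDerivAt.comp x hnormSq
  rw [show (ψ.normSq : V → ℂ) = Complex.ofRealCLM ∘ fun y => ‖ψ y‖ ^ 2 from
    funext ψ.normSq_apply, h.fderiv]
  simp

theorem SchwartzMap.norm_fderiv_normSq_apply_le (ψ : 𝓢(V, E)) (x v : V) :
    ‖fderiv ℝ ψ.normSq x v‖ ≤ 2 * ‖ψ x‖ * ‖fderiv ℝ ψ x v‖ := by
  rw [fderiv_normSq_apply, Complex.norm_real, Real.norm_eq_abs, abs_mul, abs_two, mul_assoc]
  gcongr
  exact abs_real_inner_le_norm _ _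

end NormSq

theorem OrthonormalBasis.norm_apply_le_norm_mul_sqrt_sum_sq {ι V F : Type*} [Fintype ι]
    [NormedAddCommGroup V] [InnerProductSpace ℝ V] [NormedAddCommGroup F] [NormedSpace ℝ F]
    (b : OrthonormalBasis ι ℝ V) (L : V →L[ℝ] F) (k : V) :
    ‖L k‖ ≤ ‖k‖ * √(∑ i, ‖L (b i)‖ ^ 2) := by
  calc ‖L k‖ = ‖∑ i, b.repr k i • L (b i)‖ := by
        conv_lhs => rw [← b.sum_repr k]
        simp [map_sum]
    _ ≤ ∑ i, |b.repr k i| * ‖L (b i)‖ := by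
        refine (norm_sum_le _ _).trans_eq ?_
        simp [norm_smul]
    _ ≤ √(∑ i, |b.repr k i| ^ 2) * √(∑ i, ‖L (b i)‖ ^ 2) := Real.sum_mul_le_sqrt_mul_sqrt _ _ _
    _ = ‖k‖ * √(∑ i, ‖L (b i)‖ ^ 2) := by
        rw [← b.repr.norm_map k, EuclideanSpace.norm_eq]
        simp

theorem integral_mul_le_sqrt_integral_sq_mul_sqrt_integral_sq {α : Type*} [MeasurableSpace α]
    {μ : Measure α} {f g : α → ℝ} (hf₀ : 0 ≤ᵐ[μ] f) (hg₀ : 0 ≤ᵐ[μ] g)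
    (hf : MemLp f 2 μ) (hg : MemLp g 2 μ) :
    ∫ x, f x * g x ∂μ ≤ √(∫ x, f x ^ 2 ∂μ) * √(∫ x, g x ^ 2 ∂μ) := by
  have h := integral_mul_le_Lp_mul_Lq_of_nonneg Real.HolderConjugate.two_two hf₀ hg₀
    (by simpa using hf) (by simpa using hg)
  simpa [Real.sqrt_eq_rpow] using h

section Main

variable {ι V E : Type*} [Fintype ι] [NormedAddCommGroup V] [InnerProductSpace ℝ V]
  [FiniteDimensional ℝ V] [MeasurableSpace V] [BorelSpace V]
  [NormedAddCommGroup E] [InnerProductSpace ℝ E]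

theorem SchwartzMap.memLp_sqrt_sum_sq_fderiv (b : OrthonormalBasis ι ℝ V) (ψ : 𝓢(V, E)) :
    MemLp (fun x => √(∑ i, ‖fderiv ℝ ψ x (b i)‖ ^ 2)) 2 := by
  simp only [← lineDerivOp_apply_eq_fderiv]
  have hcont : Continuous fun x => √(∑ i, ‖(∂_{b i} ψ : 𝓢(V, E)) x‖ ^ 2) := by fun_prop
  rw [memLp_two_iff_integrable_sq hcont.aestronglyMeasurable]
  simp only [Real.sq_sqrt (Finset.sum_nonneg fun i _ => sq_nonneg _)]
  exact integrable_finsetSum _ fun i _ => ((∂_{b i} ψ).memLp 2).integrable_norm_pow two_ne_zero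

theorem SchwartzMap.norm_mul_norm_fourier_normSq_le (b : OrthonormalBasis ι ℝ V)
    (ψ : 𝓢(V, E)) (k : V) :
    ‖k‖ * ‖𝓕 (ψ.normSq : V → ℂ) ((2 * π)⁻¹ • k)‖ ≤
      2 * √(∫ x, ‖ψ x‖ ^ 2) * √(∫ x, ∑ i, ‖fderiv ℝ ψ x (b i)‖ ^ 2) := by
  rcases eq_or_ne k 0 with rfl | hk
  · simp only [norm_zero, zero_mul]
    positivity
  set G := fun x => √(∑ i, ‖fderiv ℝ ψ x (b i)‖ ^ 2)
  have hG : MemLp G 2 := ψ.memLp_sqrt_sum_sq_fderiv b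
  have hψ : MemLp (fun x => ‖ψ x‖) 2 := (ψ.memLp 2).norm
  refine le_of_mul_le_mul_left ?_ (norm_pos_iff.2 hk)
  calc ‖k‖ * (‖k‖ * ‖𝓕 (ψ.normSq : V → ℂ) ((2 * π)⁻¹ • k)‖)
      = ‖k‖ ^ 2 * ‖𝓕 (ψ.normSq : V → ℂ) ((2 * π)⁻¹ • k)‖ := by ring
    _ ≤ ∫ x, ‖fderiv ℝ ψ.normSq x k‖ :=
        ψ.normSq.sq_norm_mul_norm_fourier_le_integral_norm_fderiv k
    _ ≤ ∫ x, 2 * ‖k‖ * (‖ψ x‖ * G x) := by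
        refine integral_mono_of_nonneg (.of_forall fun x => norm_nonneg _)
          ((hψ.integrable_mul hG).const_mul _) (.of_forall fun x => ?_)
        calc ‖fderiv ℝ ψ.normSq x k‖ ≤ 2 * ‖ψ x‖ * ‖fderiv ℝ ψ x k‖ :=
              ψ.norm_fderiv_normSq_apply_le x k
          _ ≤ 2 * ‖ψ x‖ * (‖k‖ * G x) := by
              gcongr
              exact b.norm_apply_le_norm_mul_sqrt_sum_sq _ k
          _ = 2 * ‖k‖ * (‖ψ x‖ * G x) := by ring
    _ = 2 * ‖k‖ * ∫ x, ‖ψ x‖ * G x := integral_const_mul _ _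
    _ ≤ 2 * ‖k‖ * (√(∫ x, ‖ψ x‖ ^ 2) * √(∫ x, G x ^ 2)) := by
        gcongr
        exact integral_mul_le_sqrt_integral_sq_mul_sqrt_integral_sq
          (.of_forall fun x => norm_nonneg _) (.of_forall fun x => Real.sqrt_nonneg _) hψ hG
    _ = ‖k‖ * (2 * √(∫ x, ‖ψ x‖ ^ 2) * √(∫ x, ∑ i, ‖fderiv ℝ ψ x (b i)‖ ^ 2)) := by
        simp only [G, Real.sq_sqrt (Finset.sum_nonneg fun i _ => sq_nonneg _)]
        ring

end Main

/-- For a Schwartz function `ψ : ℝ² → ℂ²` with density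
`ρ(x) = ‖ψ(x)‖²`, the weighted Fourier transform of `ρ` obeys
`‖k‖ |∫ e^{-ik·x} ρ(x) dx| ≤ 2 ‖ψ‖_{L²} ‖∇ψ‖_{L²}`. -/
theorem weighted_fourier_density_bound
    (ψ : SchwartzMap (EuclideanSpace ℝ (Fin 2)) (EuclideanSpace ℂ (Fin 2)))
    (k : EuclideanSpace ℝ (Fin 2)) :
    ‖k‖ * ‖∫ x : EuclideanSpace ℝ (Fin 2),
        Complex.exp (-(Complex.I * ((inner ℝ k x : ℝ) : ℂ))) * ((‖ψ x‖ ^ 2 : ℝ) : ℂ)‖ ≤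
      2 * Real.sqrt (∫ x : EuclideanSpace ℝ (Fin 2), ‖ψ x‖ ^ 2) *
        Real.sqrt (∫ x : EuclideanSpace ℝ (Fin 2),
          (‖fderiv ℝ (⇑ψ) x (EuclideanSpace.single 0 1)‖ ^ 2 +
            ‖fderiv ℝ (⇑ψ) x (EuclideanSpace.single 1 1)‖ ^ 2)) := by
  have h := ψ.norm_mul_norm_fourier_normSq_le (EuclideanSpace.basisFun (Fin 2) ℝ) k
  simp only [EuclideanSpace.basisFun_apply, Fin.sum_univ_two] at h
  simpa only [← integral_cexp_neg_inner_smul_eq_fourier, normSq_apply, smul_eq_mul] using h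
end
end
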